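/- Let ρ > 0 and let x ∈ ℝⁿ_↓ with xₙ > 0 (all entries positive). Let w* be a global minimizer of H(w) := −(ρ/2)⟨x, w⟩² + eᵀw over the set 𝔹ⁿ_↓ = {w ∈ ℝⁿ_↓ : ‖w‖₂ ≤ 1}. Then either w* = 0 or ‖w*‖₂ = 1 and w* is a global minimizer of H over S^{n-1}_+. Furthermore, in either case ⟨x, w*⟩ w* ∈ prox_{(1/ρ)h₁}(x). -/

import Mathlib

/-- The ℓ₁ norm on `ℝⁿ`. -/
noncomputable def l1norm {n : ℕ} (x : Fin n → ℝ) : ℝ := ∑ i, |x i|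

/-- The ℓ₂ norm on `ℝⁿ`. -/
noncomputable def l2norm {n : ℕ} (x : Fin n → ℝ) : ℝ := Real.sqrt (∑ i, (x i) ^ 2)

-- `h₁(x) = ‖x‖₁/‖x‖₂` for `x ≠ 0`, and `h₁(0) = 0`.
open Classical in
noncomputable def h1 {n : ℕ} (x : Fin n → ℝ) : ℝ :=
  if x = 0 then 0 else l1norm x / l2norm x

/-- `prox_{(1/ρ) f}(z)`: the set of global minimizers of `(ρ/2)‖u - z‖₂² + f(u)`. -/
noncomputable def proxSet {n : ℕ} (ρ : ℝ) (f : (Fin n → ℝ) → ℝ) (z : Fin n → ℝ) :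
    Set (Fin n → ℝ) :=
  {u | ∀ v : Fin n → ℝ,
    ρ / 2 * (∑ i, (u i - z i) ^ 2) + f u ≤ ρ / 2 * (∑ i, (v i - z i) ^ 2) + f v}

/-!
Write a nonzero `u` as `r • w` with `r > 0` and `‖w‖₂ = 1`. Since `h₁` only sees `‖u‖₁` and
`‖u‖₂`, replacing `u` by the nonincreasing rearrangement of `|u|` keeps `h₁(u)` and `‖u‖₂` and, by
the rearrangement inequality, can only increase `⟨x, u⟩`; so both the prox objective and `H` may be
minimized over `ℝⁿ_↓`. For a nonnegative unit `w` the prox objective at `r • w` equals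
`ρ/2 (r - ⟨x, w⟩)² + ρ/2 ‖x‖² + H(w)`, which is minimal at `r = ⟨x, w⟩`. Hence `ρ/2 ‖x‖² + H(w*)`
bounds the prox objective from below and is attained at `⟨x, w*⟩ w*`.
-/

open Finset

variable {n : ℕ}

lemma sum_sq_smul (t : ℝ) (v : Fin n → ℝ) : ∑ i, (t • v) i ^ 2 = t ^ 2 * ∑ i, v i ^ 2 := by
  simp only [Pi.smul_apply, smul_eq_mul, mul_pow, mul_sum]

lemma sum_sub_sq_eq (u z : Fin n → ℝ) :
    ∑ i, (u i - z i) ^ 2 = ∑ i, u i ^ 2 - 2 * (z ⬝ᵥ u) + ∑ i, z i ^ 2 := by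
  have hexp : ∀ i, (u i - z i) ^ 2 = u i ^ 2 - 2 * (z i * u i) + z i ^ 2 := fun i => by ring
  simp only [hexp, sum_add_distrib, sum_sub_distrib, ← mul_sum, dotProduct]

lemma sq_l2norm (v : Fin n → ℝ) : l2norm v ^ 2 = ∑ i, v i ^ 2 :=
  Real.sq_sqrt (sum_nonneg fun _ _ => sq_nonneg _)

lemma l2norm_pos {v : Fin n → ℝ} (hv : v ≠ 0) : 0 < l2norm v := by
  obtain ⟨j, hj⟩ := Function.ne_iff.mp hv
  exact Real.sqrt_pos.2 <|
    sum_pos' (fun i _ => sq_nonneg _) ⟨j, mem_univ j, pow_two_pos_of_ne_zero hj⟩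

lemma l1norm_smul (t : ℝ) (v : Fin n → ℝ) : l1norm (t • v) = |t| * l1norm v := by
  simp only [l1norm, Pi.smul_apply, smul_eq_mul, abs_mul, mul_sum]

lemma l2norm_smul (t : ℝ) (v : Fin n → ℝ) : l2norm (t • v) = |t| * l2norm v := by
  rw [l2norm, sum_sq_smul, Real.sqrt_mul (sq_nonneg t), Real.sqrt_sq_eq_abs, l2norm]

lemma sum_sq_inv_l2norm_smul {v : Fin n → ℝ} (hv : l2norm v ≠ 0) :
    ∑ i, ((l2norm v)⁻¹ • v) i ^ 2 = 1 := by
  rw [sum_sq_smul, ← sq_l2norm, inv_pow, inv_mul_cancel₀ (pow_ne_zero 2 hv)]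

-- At `v = 0` the right-hand side is `0 / 0 = 0` as well.
lemma h1_eq_l1norm_div_l2norm (v : Fin n → ℝ) : h1 v = l1norm v / l2norm v := by
  by_cases hv : v = 0
  · simp [h1, hv, l1norm]
  · simp [h1, hv]

lemma h1_smul {t : ℝ} (ht : t ≠ 0) (v : Fin n → ℝ) : h1 (t • v) = h1 v := by
  rw [h1_eq_l1norm_div_l2norm, h1_eq_l1norm_div_l2norm, l1norm_smul, l2norm_smul,
    mul_div_mul_left _ _ (abs_ne_zero.2 ht)]

lemma h1_of_sum_sq_eq_one {w : Fin n → ℝ} (hw0 : ∀ i, 0 ≤ w i) (hw : ∑ i, w i ^ 2 = 1) :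
    h1 w = ∑ i, w i := by
  rw [h1_eq_l1norm_div_l2norm, l2norm, hw, Real.sqrt_one, div_one, l1norm]
  exact sum_congr rfl fun i _ => abs_of_nonneg (hw0 i)

lemma dotProduct_pos {x w : Fin n → ℝ} (hx : ∀ i, 0 < x i) (hw0 : ∀ i, 0 ≤ w i) (hw : w ≠ 0) :
    0 < x ⬝ᵥ w := by
  obtain ⟨j, hj⟩ := Function.ne_iff.mp hw
  exact sum_pos' (fun i _ => mul_nonneg (hx i).le (hw0 i))
    ⟨j, mem_univ j, mul_pos (hx j) (lt_of_le_of_ne (hw0 j) (Ne.symm hj))⟩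

noncomputable def sortedAbs (w : Fin n → ℝ) : Fin n → ℝ :=
  fun i => |w (Tuple.sort (fun j => -|w j|) i)|

lemma antitone_sortedAbs (w : Fin n → ℝ) : Antitone (sortedAbs w) := fun i j hij => by
  simpa [sortedAbs] using Tuple.monotone_sort (fun j => -|w j|) hij

lemma sortedAbs_nonneg (w : Fin n → ℝ) (i : Fin n) : 0 ≤ sortedAbs w i := abs_nonneg _

lemma sum_sortedAbs (w : Fin n → ℝ) : ∑ i, sortedAbs w i = l1norm w :=
  Equiv.sum_comp _ fun j => |w j|

lemma sum_sq_sortedAbs (w : Fin n → ℝ) : ∑ i, sortedAbs w i ^ 2 = ∑ i, w i ^ 2 := by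
  simp only [sortedAbs, sq_abs]
  exact Equiv.sum_comp _ fun j => w j ^ 2

lemma l2norm_sortedAbs (w : Fin n → ℝ) : l2norm (sortedAbs w) = l2norm w := by
  rw [l2norm, sum_sq_sortedAbs, l2norm]

lemma h1_sortedAbs (w : Fin n → ℝ) : h1 (sortedAbs w) = h1 w := by
  rw [h1_eq_l1norm_div_l2norm, h1_eq_l1norm_div_l2norm, l2norm_sortedAbs, l1norm]
  simp only [abs_abs, sortedAbs, ← sum_sortedAbs w]

lemma dotProduct_le_dotProduct_sortedAbs {x : Fin n → ℝ} (hx : Antitone x) (hx0 : ∀ i, 0 ≤ x i)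
    (w : Fin n → ℝ) : x ⬝ᵥ w ≤ x ⬝ᵥ sortedAbs w := by
  set σ := Tuple.sort fun j => -|w j|
  calc x ⬝ᵥ w ≤ ∑ i, x i * |w i| :=
        sum_le_sum fun i _ => mul_le_mul_of_nonneg_left (le_abs_self _) (hx0 i)
    _ = ∑ i, x i * sortedAbs w (σ⁻¹ i) := by simp [sortedAbs, σ]
    _ ≤ x ⬝ᵥ sortedAbs w := (hx.monovary (antitone_sortedAbs w)).sum_mul_comp_perm_le_sum_mul

section Prox

variable {ρ : ℝ} {x : Fin n → ℝ}

noncomputable def proxObjective (ρ : ℝ) (f : (Fin n → ℝ) → ℝ) (z u : Fin n → ℝ) : ℝ :=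
  ρ / 2 * ∑ i, (u i - z i) ^ 2 + f u

-- The paper's `H`.
noncomputable def directionObjective (ρ : ℝ) (x w : Fin n → ℝ) : ℝ :=
  -(ρ / 2) * (x ⬝ᵥ w) ^ 2 + ∑ i, w i

def descUnitBall (n : ℕ) : Set (Fin n → ℝ) :=
  {w | Antitone w ∧ (∀ i, 0 ≤ w i) ∧ ∑ i, w i ^ 2 ≤ 1}

lemma zero_mem_descUnitBall : (0 : Fin n → ℝ) ∈ descUnitBall n :=
  ⟨fun _ _ _ => le_rfl, fun _ => le_rfl, by simp⟩

lemma sortedAbs_mem_descUnitBall {w : Fin n → ℝ} (hw : ∑ i, w i ^ 2 ≤ 1) :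
    sortedAbs w ∈ descUnitBall n :=
  ⟨antitone_sortedAbs w, sortedAbs_nonneg w, (sum_sq_sortedAbs w).trans_le hw⟩

lemma inv_l2norm_smul_mem_descUnitBall {w : Fin n → ℝ} (hw : Antitone w) (hw0 : ∀ i, 0 ≤ w i)
    (hw2 : l2norm w ≠ 0) : (l2norm w)⁻¹ • w ∈ descUnitBall n := by
  have ht : 0 ≤ (l2norm w)⁻¹ := inv_nonneg.2 (Real.sqrt_nonneg _)
  exact ⟨fun i j hij => mul_le_mul_of_nonneg_left (hw hij) ht,
    fun i => mul_nonneg ht (hw0 i), (sum_sq_inv_l2norm_smul hw2).le⟩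

lemma directionObjective_zero : directionObjective ρ x 0 = 0 := by
  simp [directionObjective]

lemma directionObjective_smul (t : ℝ) (w : Fin n → ℝ) :
    directionObjective ρ x (t • w) = -(ρ / 2 * (x ⬝ᵥ w) ^ 2) * t ^ 2 + (∑ i, w i) * t := by
  simp only [directionObjective, dotProduct_smul, Pi.smul_apply, smul_eq_mul, ← mul_sum]
  ring

lemma directionObjective_sortedAbs_le (hρ : 0 ≤ ρ) (hx : Antitone x) (hx0 : ∀ i, 0 ≤ x i)
    {w : Fin n → ℝ} (hw0 : ∀ i, 0 ≤ w i) :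
    directionObjective ρ x (sortedAbs w) ≤ directionObjective ρ x w := by
  have hsum : ∑ i, sortedAbs w i = ∑ i, w i := by
    rw [sum_sortedAbs, l1norm]
    exact sum_congr rfl fun i _ => abs_of_nonneg (hw0 i)
  have hdot : (x ⬝ᵥ w) ^ 2 ≤ (x ⬝ᵥ sortedAbs w) ^ 2 :=
    pow_le_pow_left₀ (sum_nonneg fun i _ => mul_nonneg (hx0 i) (hw0 i))
      (dotProduct_le_dotProduct_sortedAbs hx hx0 w) 2
  rw [directionObjective, directionObjective, hsum]
  nlinarith

lemma proxObjective_smul_of_sum_sq_eq_one {r : ℝ} (hr : 0 < r) {w : Fin n → ℝ}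
    (hw0 : ∀ i, 0 ≤ w i) (hw : ∑ i, w i ^ 2 = 1) :
    proxObjective ρ h1 x (r • w) =
      ρ / 2 * (r - x ⬝ᵥ w) ^ 2 + ρ / 2 * ∑ i, x i ^ 2 + directionObjective ρ x w := by
  rw [proxObjective, sum_sub_sq_eq, h1_smul hr.ne', h1_of_sum_sq_eq_one hw0 hw, sum_sq_smul, hw,
    dotProduct_smul, smul_eq_mul, directionObjective]
  ring

lemma proxObjective_sortedAbs_le (hρ : 0 ≤ ρ) (hx : Antitone x) (hx0 : ∀ i, 0 ≤ x i)
    (v : Fin n → ℝ) : proxObjective ρ h1 x (sortedAbs v) ≤ proxObjective ρ h1 x v := by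
  have := dotProduct_le_dotProduct_sortedAbs hx hx0 v
  rw [proxObjective, proxObjective, sum_sub_sq_eq, sum_sub_sq_eq, sum_sq_sortedAbs, h1_sortedAbs]
  nlinarith

/- Along the ray `t • ws`, `directionObjective` is `-a t² + b t` with `a > 0`; minimality against
`t = 0` forces `b ≤ a`, so it strictly decreases for `t ≥ 1`. -/
lemma sum_sq_eq_one_of_isMinOn (hρ : 0 < ρ) (hx : ∀ i, 0 < x i) {ws : Fin n → ℝ}
    (hmin : IsMinOn (directionObjective ρ x) (descUnitBall n) ws) (hws : ws ∈ descUnitBall n)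
    (hws0 : ws ≠ 0) : ∑ i, ws i ^ 2 = 1 := by
  by_contra hne
  have hlt : l2norm ws < 1 :=
    (Real.sqrt_lt' one_pos).2 (by simpa using lt_of_le_of_ne hws.2.2 hne)
  have hpos := l2norm_pos hws0
  have hT : 1 < (l2norm ws)⁻¹ := (one_lt_inv₀ hpos).2 hlt
  have hat0 := isMinOn_iff.1 hmin 0 zero_mem_descUnitBall
  have hatT := isMinOn_iff.1 hmin _ (inv_l2norm_smul_mem_descUnitBall hws.1 hws.2.1 hpos.ne')
  have ha : 0 < ρ / 2 * (x ⬝ᵥ ws) ^ 2 := by have := dotProduct_pos hx hws.2.1 hws0; positivity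
  have hat1 := directionObjective_smul (ρ := ρ) (x := x) 1 ws
  rw [one_smul] at hat1
  rw [directionObjective_zero, hat1] at hat0
  rw [directionObjective_smul, hat1] at hatT
  nlinarith [mul_pos ha (sub_pos.2 hT)]

lemma isMinOn_sphere_of_isMinOn (hρ : 0 ≤ ρ) (hx : Antitone x) (hx0 : ∀ i, 0 ≤ x i)
    {ws : Fin n → ℝ} (hmin : IsMinOn (directionObjective ρ x) (descUnitBall n) ws)
    {w : Fin n → ℝ} (hw : ∑ i, w i ^ 2 = 1) (hw0 : ∀ i, 0 ≤ w i) :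
    directionObjective ρ x ws ≤ directionObjective ρ x w :=
  (isMinOn_iff.1 hmin _ (sortedAbs_mem_descUnitBall hw.le)).trans
    (directionObjective_sortedAbs_le hρ hx hx0 hw0)

lemma add_directionObjective_le_proxObjective (hρ : 0 ≤ ρ) (hx : Antitone x)
    (hx0 : ∀ i, 0 ≤ x i) {ws : Fin n → ℝ}
    (hmin : IsMinOn (directionObjective ρ x) (descUnitBall n) ws) (v : Fin n → ℝ) :
    ρ / 2 * ∑ i, x i ^ 2 + directionObjective ρ x ws ≤ proxObjective ρ h1 x v := by
  by_cases hv : v = 0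
  · have := isMinOn_iff.1 hmin 0 zero_mem_descUnitBall
    simp [hv, proxObjective, directionObjective_zero, h1] at this ⊢
    linarith
  set r := l2norm (sortedAbs v)
  have hr : 0 < r := by rw [show r = l2norm v from l2norm_sortedAbs v]; exact l2norm_pos hv
  have hw := inv_l2norm_smul_mem_descUnitBall (antitone_sortedAbs v) (sortedAbs_nonneg v) hr.ne'
  calc ρ / 2 * ∑ i, x i ^ 2 + directionObjective ρ x ws
      ≤ ρ / 2 * ∑ i, x i ^ 2 + directionObjective ρ x (r⁻¹ • sortedAbs v) := by
        gcongr; exact isMinOn_iff.1 hmin _ hw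
    _ ≤ proxObjective ρ h1 x (r • r⁻¹ • sortedAbs v) := by
        rw [proxObjective_smul_of_sum_sq_eq_one hr hw.2.1 (sum_sq_inv_l2norm_smul hr.ne')]
        nlinarith [sq_nonneg (r - x ⬝ᵥ (r⁻¹ • sortedAbs v))]
    _ = proxObjective ρ h1 x (sortedAbs v) := by rw [smul_inv_smul₀ hr.ne']
    _ ≤ proxObjective ρ h1 x v := proxObjective_sortedAbs_le hρ hx hx0 v

lemma proxObjective_dotProduct_smul (hx : ∀ i, 0 < x i) {w : Fin n → ℝ} (hw0 : ∀ i, 0 ≤ w i)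
    (hw : w = 0 ∨ ∑ i, w i ^ 2 = 1) :
    proxObjective ρ h1 x ((x ⬝ᵥ w) • w) = ρ / 2 * ∑ i, x i ^ 2 + directionObjective ρ x w := by
  rcases hw with rfl | hw
  · simp [proxObjective, directionObjective_zero, h1]
  have hw' : w ≠ 0 := by rintro rfl; simp at hw
  rw [proxObjective_smul_of_sum_sq_eq_one (dotProduct_pos hx hw0 hw') hw0 hw]
  ring

end Prox

theorem stmt_19 {n : ℕ} (ρ : ℝ) (hρ : 0 < ρ)
    (x : Fin n → ℝ) (hdesc : ∀ i j : Fin n, i ≤ j → x j ≤ x i) (hpos : ∀ i, 0 < x i)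
    (H : (Fin n → ℝ) → ℝ)
    (hH : ∀ w : Fin n → ℝ, H w = -(ρ / 2) * (∑ i, x i * w i) ^ 2 + ∑ i, w i)
    (ws : Fin n → ℝ)
    (hws_desc : ∀ i j : Fin n, i ≤ j → ws j ≤ ws i) (hws_nonneg : ∀ i, 0 ≤ ws i)
    (hws_ball : ∑ i, (ws i) ^ 2 ≤ 1)
    (hmin : ∀ w : Fin n → ℝ, (∀ i j : Fin n, i ≤ j → w j ≤ w i) → (∀ i, 0 ≤ w i) →
      (∑ i, (w i) ^ 2 ≤ 1) → H ws ≤ H w) :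
    (ws = 0 ∨
      ((∑ i, (ws i) ^ 2 = 1) ∧
        ∀ w : Fin n → ℝ, (∑ i, (w i) ^ 2 = 1) → (∀ i, 0 ≤ w i) → H ws ≤ H w)) ∧
    (∑ i, x i * ws i) • ws ∈ proxSet ρ h1 x := by
  obtain rfl : H = directionObjective ρ x := funext hH
  have hx0 : ∀ i, 0 ≤ x i := fun i => (hpos i).le
  have hmin' : IsMinOn (directionObjective ρ x) (descUnitBall n) ws :=
    isMinOn_iff.2 fun w hw => hmin w hw.1 hw.2.1 hw.2.2
  have hcases : ws = 0 ∨ ∑ i, ws i ^ 2 = 1 := or_iff_not_imp_left.2 <|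
    sum_sq_eq_one_of_isMinOn hρ hpos hmin' ⟨hws_desc, hws_nonneg, hws_ball⟩
  refine ⟨hcases.imp_right fun hws => ⟨hws, fun w hw hw0 =>
    isMinOn_sphere_of_isMinOn hρ.le hdesc hx0 hmin' hw hw0⟩, fun v => ?_⟩
  change proxObjective ρ h1 x ((x ⬝ᵥ ws) • ws) ≤ proxObjective ρ h1 x v
  rw [proxObjective_dotProduct_smul hpos hws_nonneg hcases]
  exact add_directionObjective_le_proxObjective hρ.le hdesc hx0 hmin' v
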